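/- arXiv:0908.4262 — 4 statements merged into one kernel-verified Lean document; each statement's English description precedes it below -/
import Mathlib

section
/- The function K(x,y) = (x(e^y - 1) + y(e^{-x} - 1))/(e^y - e^{-x}) is monotonically increasing in both arguments x and y for x, y > 0. -/
open Real Set

noncomputable def Kfun (x y : ℝ) : ℝ :=
  (x * (exp y - 1) + y * (exp (-x) - 1)) / (exp y - exp (-x))

lemma Kfun_denom_pos {x y : ℝ} (hx : 0 < x) (hy : 0 < y) : 0 < exp y - exp (-x) := by
  have h1 : exp (-x) < exp 0 := exp_lt_exp.mpr (by linarith)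
  have h2 : exp 0 < exp y := exp_lt_exp.mpr hy
  linarith

theorem Kfun_monotone :
    (∀ y : ℝ, 0 < y → MonotoneOn (fun x : ℝ => Kfun x y) (Ioi 0)) ∧
    (∀ x : ℝ, 0 < x → MonotoneOn (fun y : ℝ => Kfun x y) (Ioi 0)) := by
  constructor
  · intro y hy
    have hdiff : DifferentiableOn ℝ (fun x : ℝ => Kfun x y) (Ioi 0) := by
      unfold Kfun
      apply DifferentiableOn.div
      · fun_prop
      · fun_prop
      · intro x hx; exact (Kfun_denom_pos hx hy).ne'
    apply monotoneOn_of_deriv_nonneg (convex_Ioi 0) hdiff.continuousOn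
      (by rwa [interior_Ioi])
    intro x hx
    rw [interior_Ioi] at hx
    have hd : 0 < exp y - exp (-x) := Kfun_denom_pos hx hy
    have hexp : HasDerivAt (fun x : ℝ => exp (-x)) (exp (-x) * (-1)) x :=
      (Real.hasDerivAt_exp (-x)).comp x ((hasDerivAt_id x).neg)
    have hn : HasDerivAt (fun x : ℝ => x * (exp y - 1) + y * (exp (-x) - 1))
        (1 * (exp y - 1) + y * (exp (-x) * (-1))) x :=
      ((hasDerivAt_id x).mul_const (exp y - 1)).add ((hexp.sub_const 1).const_mul y)
    have hD : HasDerivAt (fun x : ℝ => exp y - exp (-x)) (0 - exp (-x) * (-1)) x :=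
      (hasDerivAt_const x (exp y)).sub hexp
    have hK : HasDerivAt (fun x : ℝ => Kfun x y)
        (((1 * (exp y - 1) + y * (exp (-x) * (-1))) * (exp y - exp (-x)) -
          (x * (exp y - 1) + y * (exp (-x) - 1)) * (0 - exp (-x) * (-1))) /
          (exp y - exp (-x)) ^ 2) x := by
      unfold Kfun
      exact hn.div hD hd.ne'
    rw [hK.deriv]
    apply div_nonneg _ (sq_nonneg _)
    have heq : (1 * (exp y - 1) + y * (exp (-x) * (-1))) * (exp y - exp (-x)) -
          (x * (exp y - 1) + y * (exp (-x) - 1)) * (0 - exp (-x) * (-1)) =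
        (exp y - 1) * (exp y - exp (-x) * (1 + x + y)) := by ring
    rw [heq]
    have key : 0 ≤ exp (-x) * (exp (x + y) - (1 + (x + y))) :=
      mul_nonneg (exp_pos _).le (by linarith [add_one_le_exp (x + y)])
    have hmul : exp (-x) * exp (x + y) = exp y := by
      rw [← exp_add]; ring_nf
    have hy1 : 1 ≤ exp y := by nlinarith [add_one_le_exp y]
    apply mul_nonneg (by linarith)
    nlinarith
  · intro x hx
    have hdiff : DifferentiableOn ℝ (fun y : ℝ => Kfun x y) (Ioi 0) := by
      unfold Kfun
      apply DifferentiableOn.div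
      · fun_prop
      · fun_prop
      · intro y hy; exact (Kfun_denom_pos hx hy).ne'
    apply monotoneOn_of_deriv_nonneg (convex_Ioi 0) hdiff.continuousOn
      (by rwa [interior_Ioi])
    intro y hy
    rw [interior_Ioi] at hy
    have hd : 0 < exp y - exp (-x) := Kfun_denom_pos hx hy
    have hn : HasDerivAt (fun y : ℝ => x * (exp y - 1) + y * (exp (-x) - 1))
        (x * exp y + 1 * (exp (-x) - 1)) y :=
      (((Real.hasDerivAt_exp y).sub_const 1).const_mul x).add
        ((hasDerivAt_id y).mul_const (exp (-x) - 1))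
    have hD : HasDerivAt (fun y : ℝ => exp y - exp (-x)) (exp y) y := by
      simpa using (Real.hasDerivAt_exp y).sub_const (exp (-x))
    have hK : HasDerivAt (fun y : ℝ => Kfun x y)
        (((x * exp y + 1 * (exp (-x) - 1)) * (exp y - exp (-x)) -
          (x * (exp y - 1) + y * (exp (-x) - 1)) * exp y) /
          (exp y - exp (-x)) ^ 2) y := by
      unfold Kfun
      exact hn.div hD hd.ne'
    rw [hK.deriv]
    apply div_nonneg _ (sq_nonneg _)
    have heq : (x * exp y + 1 * (exp (-x) - 1)) * (exp y - exp (-x)) -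
          (x * (exp y - 1) + y * (exp (-x) - 1)) * exp y =
        (1 - exp (-x)) * (exp y * (x + y - 1) + exp (-x)) := by ring
    rw [heq]
    have key : 0 ≤ exp y * (exp (-(x + y)) - (1 - (x + y))) :=
      mul_nonneg (exp_pos _).le (by linarith [add_one_le_exp (-(x + y))])
    have hmul : exp y * exp (-(x + y)) = exp (-x) := by
      rw [← exp_add]; ring_nf
    have hx1 : exp (-x) ≤ 1 := by
      rw [← exp_zero]; exact exp_le_exp.mpr (by linarith)
    apply mul_nonneg (by linarith)
    nlinarith
end

section
/- The function K(x,y) = (x(e^y - 1) + y(e^{-x} - 1))/(e^y - e^{-x}) is strictly positive for x, y > 0. -/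
open Real

theorem Kfun_pos (x y : ℝ) (hx : 0 < x) (hy : 0 < y) : 0 < Kfun x y := by
  have h1 : y < exp y - 1 := by
    have := add_one_lt_exp (ne_of_gt hy); linarith
  have h2 : 1 - exp (-x) < x := by
    have := add_one_lt_exp (x := -x) (by linarith); linarith
  have hden : 0 < exp y - exp (-x) := by
    have : exp (-x) < 1 := exp_lt_one_iff.mpr (by linarith)
    have : (1:ℝ) < exp y := by nlinarith [add_one_lt_exp (ne_of_gt hy)]
    linarith
  have hnum : 0 < x * (exp y - 1) + y * (exp (-x) - 1) := by
    nlinarith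
  exact div_pos hnum hden
end

section
/- As x, y → ∞ with x/y bounded away from 0 and ∞, K(x,y) = x + o(1); more precisely, for any ε > 0 there exists M such that x, y ≥ M and c ≤ x/y ≤ C imply |K(x,y) - x| ≤ ε, where c, C > 0 are fixed constants. -/
open Real

theorem Kfun_asymptotic (c C : ℝ) (hc : 0 < c) (hcC : c ≤ C) :
    ∀ ε > 0, ∃ M : ℝ, ∀ x y : ℝ, M ≤ x → M ≤ y →
      c ≤ x / y → x / y ≤ C → |Kfun x y - x| ≤ ε := by
  intro ε hε
  refine ⟨max 1 (8 * (C + 1) / ε), fun x y hx hy hxy1 hxy2 => ?_⟩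
  have hx1 : (1 : ℝ) ≤ x := le_trans (le_max_left _ _) hx
  have hy1 : (1 : ℝ) ≤ y := le_trans (le_max_left _ _) hy
  have hy0 : (0 : ℝ) < y := lt_of_lt_of_le one_pos hy1
  have hyM : 8 * (C + 1) / ε ≤ y := le_trans (le_max_right _ _) hy
  have hyM' : 8 * (C + 1) ≤ y * ε := by
    have := (div_le_iff₀ hε).mp hyM; linarith
  have hxC : x ≤ C * y := by
    have := (div_le_iff₀ hy0).mp hxy2; linarith
  have hex : exp (-x) ≤ 1 := by
    rw [Real.exp_le_one_iff]; linarith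
  have hex0 : 0 < exp (-x) := Real.exp_pos _
  have he2 : (2 : ℝ) ≤ exp y := by
    have := Real.add_one_le_exp y; linarith
  have hD : exp y / 2 ≤ exp y - exp (-x) := by linarith
  have hD0 : (0 : ℝ) < exp y - exp (-x) := lt_of_lt_of_le (by positivity) hD
  have hey : y ^ 2 / 4 ≤ exp y := by
    have h1 := Real.add_one_le_exp (y / 2)
    have h2 : exp (y / 2) * exp (y / 2) = exp y := by
      rw [← Real.exp_add]; ring_nf
    nlinarith [Real.exp_pos (y / 2)]
  have hKx : Kfun x y - x = -((x + y) * (1 - exp (-x))) / (exp y - exp (-x)) := by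
    unfold Kfun
    field_simp
    ring
  have hnum0 : 0 ≤ (x + y) * (1 - exp (-x)) := by nlinarith
  have habs : |Kfun x y - x| = (x + y) * (1 - exp (-x)) / (exp y - exp (-x)) := by
    rw [hKx, neg_div, abs_neg, abs_of_nonneg (div_nonneg hnum0 hD0.le)]
  rw [habs]
  have hstep1 : (x + y) * (1 - exp (-x)) / (exp y - exp (-x)) ≤ (x + y) / (exp y / 2) := by
    apply div_le_div₀ (by linarith) (by nlinarith) (by positivity) hD
  refine le_trans hstep1 ?_
  rw [div_le_iff₀ (by positivity)]
  nlinarith [hey, hxC, hyM', mul_pos hy0 hε]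
end

section
/- Let u and ũ be real-valued processes with |u_t - ũ_t| ≤ C for all t ≥ 0 a.s., and let T̃ = inf{t ≥ 0 : ũ_t ∉ (-Ã, B̃)}. Suppose (e^{u_t}) is the likelihood-ratio martingale of P₁ with respect to P₀, i.e., for any stopping time S with appropriate optional sampling, P₁(E) = E₀[e^{u_S} 1_E] for E in the stopped σ-algebra. Then P₁(ũ_{T̃} ≤ -Ã) ≤ e^{-Ã + C} and P₀(ũ_{T̃} ≥ B̃) ≤ e^{-B̃ + C}. -/
/-! Change of measure: `∫ e^{u_T} dP₀ = 1`, and on the event `{ũ_T ≥ B̃}` the density `e^{u_T}`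
is at least `e^{B̃ - C}`, so Markov's inequality bounds `P₀` of that event by `e^{-B̃ + C}`.
The bound for `P₁` is the same argument with `P₀, P₁` exchanged and `u, ũ` negated. -/

open Real MeasureTheory Set

section

variable {Ω : Type*} [MeasurableSpace Ω] {μ : Measure Ω} [IsFiniteMeasure μ]

theorem measureReal_le_inv_of_integral_eq_one {f : Ω → ℝ} (hf : 0 ≤ᵐ[μ] f)
    (hint : ∫ ω, f ω ∂μ = 1) {E : Set Ω} {c : ℝ} (hc : 0 < c)
    (hE : ∀ᵐ ω ∂μ, ω ∈ E → c ≤ f ω) : μ.real E ≤ c⁻¹ := by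
  have hf_int : Integrable f μ := .of_integral_ne_zero (by simp [hint])
  have hE_sub : μ.real E ≤ μ.real {ω | c ≤ f ω} :=
    ENNReal.toReal_mono (measure_ne_top _ _) (measure_mono_ae hE)
  rw [inv_eq_one_div, le_div_iff₀' hc]
  calc c * μ.real E ≤ c * μ.real {ω | c ≤ f ω} := by gcongr
    _ ≤ ∫ ω, f ω ∂μ := mul_meas_ge_le_integral_of_nonneg hf hf_int c
    _ = 1 := hint

theorem measureReal_le_exp_of_integral_exp_eq_one {v w : Ω → ℝ} {C : ℝ}
    (hv : ∫ ω, exp (v ω) ∂μ = 1) (hvw : ∀ᵐ ω ∂μ, w ω ≤ v ω + C) (a : ℝ) :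
    μ.real {ω | a ≤ w ω} ≤ exp (-a + C) := by
  have := measureReal_le_inv_of_integral_eq_one (ae_of_all _ fun ω => (exp_pos (v ω)).le) hv
    (exp_pos (a - C))
    (by filter_upwards [hvw] with ω h (hω : a ≤ w ω) using exp_le_exp.2 (by linarith))
  rwa [← exp_neg, neg_sub, sub_eq_neg_add] at this

end

theorem dsprt_error_bounds_general {Ω : Type*} [MeasurableSpace Ω]
    (P0 P1 : Measure Ω) [IsProbabilityMeasure P0] [IsProbabilityMeasure P1]
    (u utld : ℝ → Ω → ℝ) (C A B : ℝ)
    (T : Ω → ℝ)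
    (hT : ∀ ω, T ω = sInf {t : ℝ | 0 ≤ t ∧ utld t ω ∉ Ioo (-A) B})
    (hbound0 : ∀ᵐ ω ∂P0, ∀ t : ℝ, 0 ≤ t → |u t ω - utld t ω| ≤ C)
    (hbound1 : ∀ᵐ ω ∂P1, ∀ t : ℝ, 0 ≤ t → |u t ω - utld t ω| ≤ C)
    (hchange1 : ∀ E : Set Ω, MeasurableSet E →
      (P1 E).toReal = ∫ ω in E, exp (u (T ω) ω) ∂P0)
    (hchange0 : ∀ E : Set Ω, MeasurableSet E →
      (P0 E).toReal = ∫ ω in E, exp (-(u (T ω) ω)) ∂P1) :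
    (P1 {ω | utld (T ω) ω ≤ -A}).toReal ≤ exp (-A + C) ∧
    (P0 {ω | B ≤ utld (T ω) ω}).toReal ≤ exp (-B + C) := by
  have hT_nonneg (ω : Ω) : 0 ≤ T ω := hT ω ▸ Real.sInf_nonneg fun _ ht => ht.1
  have hβ := measureReal_le_exp_of_integral_exp_eq_one (μ := P1) (C := C)
    (v := fun ω => -u (T ω) ω) (w := fun ω => -utld (T ω) ω)
    (by simpa using (hchange0 univ .univ).symm)
    (by filter_upwards [hbound1] with ω h; linarith [(abs_le.1 (h _ (hT_nonneg ω))).2]) A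
  have hα := measureReal_le_exp_of_integral_exp_eq_one (μ := P0) (C := C)
    (v := fun ω => u (T ω) ω) (w := fun ω => utld (T ω) ω)
    (by simpa using (hchange1 univ .univ).symm)
    (by filter_upwards [hbound0] with ω h; linarith [(abs_le.1 (h _ (hT_nonneg ω))).1]) B
  exact ⟨by simpa only [le_neg, measureReal_def] using hβ, hα⟩

theorem dsprt_error_bounds {Ω : Type*} [MeasurableSpace Ω]
    (P0 P1 : Measure Ω) [IsProbabilityMeasure P0] [IsProbabilityMeasure P1]
    (u utld : ℝ → Ω → ℝ) (C A B : ℝ) (hC : 0 ≤ C) (hA : 0 < A) (hB : 0 < B)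
    (T : Ω → ℝ)
    (hT : ∀ ω, T ω = sInf {t : ℝ | 0 ≤ t ∧ utld t ω ∉ Ioo (-A) B})
    (hbound0 : ∀ᵐ ω ∂P0, ∀ t : ℝ, 0 ≤ t → |u t ω - utld t ω| ≤ C)
    (hbound1 : ∀ᵐ ω ∂P1, ∀ t : ℝ, 0 ≤ t → |u t ω - utld t ω| ≤ C)
    (hchange1 : ∀ E : Set Ω, MeasurableSet E →
      (P1 E).toReal = ∫ ω in E, exp (u (T ω) ω) ∂P0)
    (hchange0 : ∀ E : Set Ω, MeasurableSet E →
      (P0 E).toReal = ∫ ω in E, exp (-(u (T ω) ω)) ∂P1) :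
    (P1 {ω | utld (T ω) ω ≤ -A}).toReal ≤ exp (-A + C) ∧
    (P0 {ω | B ≤ utld (T ω) ω}).toReal ≤ exp (-B + C) :=
  dsprt_error_bounds_general P0 P1 u utld C A B T hT hbound0 hbound1 hchange1 hchange0
end
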